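/- arXiv:math/0702300 — 2 statements merged into one kernel-verified Lean document; each statement's English description precedes it below -/
import Mathlib

section
/- (Von Staudt–Clausen) For every positive integer k, the rational number B_{2k} + Σ_{p prime, (p-1) | 2k} 1/p is an integer; equivalently, B_{2k} ≡ −Σ_{p prime, (p-1) | 2k} 1/p (mod 1). -/
open Finset

/-- `x` is `p`-integral: `p` does not divide its denominator. -/
def PIden (p : ℕ) (x : ℚ) : Prop := ¬ (p ∣ x.den)

lemma PIden_intCast (p : ℕ) (hp : p.Prime) (n : ℤ) : PIden p ((n : ℚ)) := by
  simp only [PIden, Rat.den_intCast, Nat.dvd_one]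
  exact hp.one_lt.ne'

lemma PIden_natCast (p : ℕ) (hp : p.Prime) (n : ℕ) : PIden p ((n : ℚ)) := by
  simpa using PIden_intCast p hp (n : ℤ)

lemma PIden_add {p : ℕ} (hp : p.Prime) {a b : ℚ} (ha : PIden p a) (hb : PIden p b) :
    PIden p (a + b) := by
  intro h
  have h2 : p ∣ a.den * b.den := h.trans (Rat.add_den_dvd a b)
  rcases (Nat.Prime.dvd_mul hp).mp h2 with h3 | h3
  exacts [ha h3, hb h3]

lemma PIden_mul {p : ℕ} (hp : p.Prime) {a b : ℚ} (ha : PIden p a) (hb : PIden p b) :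
    PIden p (a * b) := by
  intro h
  have h2 : p ∣ a.den * b.den := h.trans (Rat.mul_den_dvd a b)
  rcases (Nat.Prime.dvd_mul hp).mp h2 with h3 | h3
  exacts [ha h3, hb h3]

lemma PIden_neg {p : ℕ} {a : ℚ} (ha : PIden p a) : PIden p (-a) := by
  simpa [PIden] using ha

lemma PIden_sub {p : ℕ} (hp : p.Prime) {a b : ℚ} (ha : PIden p a) (hb : PIden p b) :
    PIden p (a - b) := by
  rw [sub_eq_add_neg]; exact PIden_add hp ha (PIden_neg hb)

lemma PIden_sum {p : ℕ} (hp : p.Prime) {ι : Type*} {s : Finset ι} {f : ι → ℚ}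
    (h : ∀ i ∈ s, PIden p (f i)) : PIden p (∑ i ∈ s, f i) :=
  Finset.sum_induction f (PIden p) (fun _ _ => PIden_add hp)
    (PIden_intCast p hp 0 |>.imp (by simp)) h

/-- Key integrality: `p^a / t` is `p`-integral when `v_p(t) ≤ a`. -/
lemma PIden_pow_div {p : ℕ} (hp : p.Prime) {t a : ℕ} (ht : t ≠ 0)
    (hv : t.factorization p ≤ a) : PIden p ((p : ℚ) ^ a / (t : ℚ)) := by
  set v := t.factorization p with hvdef
  have hdvd : p ^ v ∣ t := Nat.ordProj_dvd t p
  obtain ⟨u, hu⟩ := hdvd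
  have hu0 : u ≠ 0 := by rintro rfl; simp at hu; exact ht hu
  have hpu : ¬ p ∣ u := by
    have := Nat.not_dvd_ordCompl hp ht
    have h2 : ordCompl[p] t = u := by
      rw [← hvdef, hu, Nat.mul_div_cancel_left _ (pow_pos hp.pos v)]
    rwa [h2] at this
  have hp0 : (p : ℚ) ≠ 0 := by exact_mod_cast hp.pos.ne'
  have hu0' : (u : ℚ) ≠ 0 := by exact_mod_cast hu0
  have heq : (p : ℚ) ^ a / (t : ℚ) = ((p ^ (a - v) : ℕ) : ℚ) / ((u : ℕ) : ℚ) := by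
    rw [hu]
    push_cast
    rw [show a = (a - v) + v by omega, pow_add, Nat.add_sub_cancel]
    field_simp
  rw [heq]
  intro hden
  apply hpu
  have hdvd2 : ((((p ^ (a - v) : ℕ) : ℚ) / ((u : ℕ) : ℚ)).den : ℤ) ∣ (u : ℤ) := by
    have := Rat.den_dvd ((p ^ (a - v) : ℕ) : ℤ) ((u : ℕ) : ℤ)
    rwa [Rat.divInt_eq_div, Int.cast_natCast, Int.cast_natCast] at this
  have : (p : ℤ) ∣ (u : ℤ) := dvd_trans (by exact_mod_cast hden) hdvd2
  exact_mod_cast this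

lemma factorization_le_sub_one {p t : ℕ} (hp : p.Prime) (ht : 1 ≤ t) :
    t.factorization p ≤ t - 1 := by
  set v := t.factorization p
  have hdvd : p ^ v ∣ t := Nat.ordProj_dvd t p
  have h1 : p ^ v ≤ t := Nat.le_of_dvd (by omega) hdvd
  have h2 : 2 ^ v ≤ p ^ v := Nat.pow_le_pow_left hp.two_le v
  have h3 : v < 2 ^ v := Nat.lt_two_pow_self
  omega

lemma factorization_le_sub_two {p t : ℕ} (hp : p.Prime) (ht : 3 ≤ t) :
    t.factorization p ≤ t - 2 := by
  set v := t.factorization p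
  have hdvd : p ^ v ∣ t := Nat.ordProj_dvd t p
  have h1 : p ^ v ≤ t := Nat.le_of_dvd (by omega) hdvd
  rcases Nat.lt_or_ge v 2 with hv | hv
  · omega
  · have h2 : 2 ^ v ≤ p ^ v := Nat.pow_le_pow_left hp.two_le v
    have h3 : v - 1 < 2 ^ (v - 1) := Nat.lt_two_pow_self
    have h4 : 2 ^ v = 2 * 2 ^ (v - 1) := by
      rw [← pow_succ']
      congr 1
      omega
    omega

lemma zmod_sum_pow (p : ℕ) [hfp : Fact p.Prime] (n : ℕ) (hn : 0 < n) :
    (∑ x : ZMod p, x ^ n) = if (p - 1) ∣ n then -1 else 0 := by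
  have hp := hfp.out
  classical
  let φ : (ZMod p)ˣ ↪ ZMod p := ⟨fun x => x, Units.val_injective⟩
  have hmap : univ.map φ = univ \ {0} := by
    ext x
    simpa only [mem_map, mem_univ, Function.Embedding.coeFn_mk, true_and, mem_sdiff,
      mem_singleton, φ] using
        (Iff.rfl.trans isUnit_iff_ne_zero : (∃ a : (ZMod p)ˣ, (a : ZMod p) = x) ↔ ¬x = 0)
  calc (∑ x : ZMod p, x ^ n)
      = ∑ x ∈ univ \ {(0 : ZMod p)}, x ^ n := by
        rw [← sum_sdiff ({0} : Finset (ZMod p)).subset_univ, sum_singleton,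
          zero_pow hn.ne', add_zero]
    _ = ∑ x : (ZMod p)ˣ, ((x : ZMod p)) ^ n := by
        rw [← hmap, Finset.sum_map]
        rfl
    _ = if (p - 1) ∣ n then -1 else 0 := by
        have := FiniteField.sum_pow_units (ZMod p) n
        rwa [ZMod.card p] at this

lemma int_sum_pow_dvd (p : ℕ) (hp : p.Prime) (n : ℕ) (hn : 0 < n) :
    (p : ℤ) ∣ (∑ i ∈ range p, (i : ℤ) ^ n) + (if (p - 1) ∣ n then 1 else 0) := by
  haveI : Fact p.Prime := ⟨hp⟩
  rw [← ZMod.intCast_zmod_eq_zero_iff_dvd]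
  push_cast
  have hre : (∑ i ∈ range p, ((i : ZMod p)) ^ n) = ∑ x : ZMod p, x ^ n := by
    refine Finset.sum_nbij' (fun i => ((i : ZMod p))) (fun x => x.val) ?_ ?_ ?_ ?_ ?_
    · intro i _; exact mem_univ _
    · intro x _; exact mem_range.mpr (ZMod.val_lt x)
    · intro i hi; exact ZMod.val_cast_of_lt (mem_range.mp hi)
    · intro x _; exact ZMod.natCast_rightInverse x
    · intro i _; rfl
  rw [hre, zmod_sum_pow p n hn]
  split_ifs <;> simp

lemma choose_cast_identity (n i : ℕ) (hi : i ≤ n) :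
    (((n + 1).choose i : ℚ)) * ((n + 1 - i : ℕ) : ℚ) = ((n + 1 : ℕ) : ℚ) * (n.choose i : ℚ) := by
  have key : (n + 1).choose i * (n + 1 - i) = (n + 1) * n.choose i := by
    set j := n - i with hj
    have h1 : (n + 1).choose i = (n + 1).choose (j + 1) := by
      rw [← Nat.choose_symm (by omega : i ≤ n + 1)]
      congr 1
      omega
    have h2 : n.choose i = n.choose j := by
      rw [← Nat.choose_symm hi]
    have h3 := Nat.add_one_mul_choose_eq n j
    rw [h1, h2, show n + 1 - i = j + 1 by omega]
    simpa [Nat.succ_eq_add_one, mul_comm] using h3.symm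
  exact_mod_cast key

lemma faulhaber_rearrange (p n : ℕ) (hn : 0 < n) :
    (p : ℚ) * bernoulli n = (((∑ i ∈ range p, (i : ℤ) ^ n) : ℤ) : ℚ)
      - ∑ i ∈ range n,
          ((p : ℚ) * bernoulli i) * (n.choose i : ℚ) * ((p : ℚ) ^ (n - i) / ((n + 1 - i : ℕ) : ℚ)) := by
  have h := sum_range_pow p n
  rw [Finset.sum_range_succ] at h
  have hcast : (∑ i ∈ range p, (i : ℚ) ^ n) = (((∑ i ∈ range p, (i : ℤ) ^ n) : ℤ) : ℚ) := by
    push_cast; ring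
  have hne : ((n : ℚ) + 1) ≠ 0 := by positivity
  have hlast : bernoulli n * ((n + 1).choose n : ℚ) * (p : ℚ) ^ (n + 1 - n) / ((n : ℚ) + 1)
      = (p : ℚ) * bernoulli n := by
    rw [Nat.choose_succ_self_right, show n + 1 - n = 1 by omega]
    push_cast
    field_simp
  have hterm : ∀ i ∈ range n,
      bernoulli i * ((n + 1).choose i : ℚ) * (p : ℚ) ^ (n + 1 - i) / ((n : ℚ) + 1)
        = ((p : ℚ) * bernoulli i) * (n.choose i : ℚ)
            * ((p : ℚ) ^ (n - i) / ((n + 1 - i : ℕ) : ℚ)) := by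
    intro i hi
    have hi' : i < n := mem_range.mp hi
    have key := choose_cast_identity n i hi'.le
    have hne2 : ((n + 1 - i : ℕ) : ℚ) ≠ 0 := by
      have : 0 < n + 1 - i := by omega
      positivity
    have hpow : (p : ℚ) ^ (n + 1 - i) = (p : ℚ) ^ (n - i) * (p : ℚ) := by
      rw [← pow_succ]
      congr 1
      omega
    push_cast at key
    rw [hpow, ← mul_div_assoc, div_eq_div_iff hne hne2]
    linear_combination bernoulli i * (p:ℚ) ^ (n - i) * (p:ℚ) * key
  rw [Finset.sum_congr rfl hterm, hcast, hlast] at h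
  linarith [h]

lemma pid_p_mul_bernoulli (p : ℕ) (hp : p.Prime) (n : ℕ) :
    PIden p ((p : ℚ) * bernoulli n) := by
  induction n using Nat.strong_induction_on with
  | _ n ih =>
    rcases Nat.eq_zero_or_pos n with rfl | hn
    · rw [bernoulli_zero, mul_one]
      exact PIden_natCast p hp p
    · rw [faulhaber_rearrange p n hn]
      apply PIden_sub hp (PIden_intCast p hp _)
      apply PIden_sum hp
      intro i hi
      have hi' : i < n := mem_range.mp hi
      apply PIden_mul hp (PIden_mul hp (ih i hi') (PIden_natCast p hp _))
      apply PIden_pow_div hp (by omega : n + 1 - i ≠ 0)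
      have := factorization_le_sub_one hp (show 1 ≤ n + 1 - i by omega) (p := p)
      omega

lemma pid_key (p k : ℕ) (hp : p.Prime) (hk : 0 < k) :
    PIden p ((((p : ℚ) * bernoulli (2 * k))
      - (((∑ i ∈ range p, (i : ℤ) ^ (2 * k)) : ℤ) : ℚ)) / p) := by
  set n := 2 * k with hndef
  have hn : 0 < n := by omega
  have hp0 : (p : ℚ) ≠ 0 := by exact_mod_cast hp.pos.ne'
  have h := faulhaber_rearrange p n hn
  have hexpr : (((p : ℚ) * bernoulli n)
      - (((∑ i ∈ range p, (i : ℤ) ^ n) : ℤ) : ℚ)) / p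
      = ∑ i ∈ range n, (-(((p : ℚ) * bernoulli i) * (n.choose i : ℚ)
          * ((p : ℚ) ^ (n - i) / ((n + 1 - i : ℕ) : ℚ))) / p) := by
    rw [← Finset.sum_div, Finset.sum_neg_distrib, h]
    ring
  rw [hexpr, show range n = range ((n - 1) + 1) from by rw [Nat.sub_add_cancel hn],
    Finset.sum_range_succ]
  apply PIden_add hp
  · apply PIden_sum hp
    intro i hi
    have hi' : i < n - 1 := mem_range.mp hi
    have hrw : -(((p : ℚ) * bernoulli i) * (n.choose i : ℚ)
          * ((p : ℚ) ^ (n - i) / ((n + 1 - i : ℕ) : ℚ))) / p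
        = ((p : ℚ) * bernoulli i) * (n.choose i : ℚ)
          * ((p : ℚ) ^ (n - i - 1) / ((n + 1 - i : ℕ) : ℚ)) * ((-1 : ℤ) : ℚ) := by
      rw [show n - i = (n - i - 1) + 1 by omega, pow_succ]
      have h1 : (p : ℚ) * bernoulli i * (n.choose i : ℚ)
            * ((p : ℚ) ^ (n - i - 1) * (p : ℚ) / ((n + 1 - i : ℕ) : ℚ))
          = ((p : ℚ) * bernoulli i * (n.choose i : ℚ)
            * ((p : ℚ) ^ (n - i - 1) / ((n + 1 - i : ℕ) : ℚ))) * (p : ℚ) := by ring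
      rw [h1, neg_div, mul_div_cancel_right₀ _ hp0]
      push_cast
      ring
    rw [hrw]
    apply PIden_mul hp _ (PIden_intCast p hp _)
    apply PIden_mul hp (PIden_mul hp (pid_p_mul_bernoulli p hp i) (PIden_natCast p hp _))
    apply PIden_pow_div hp (by omega : n + 1 - i ≠ 0)
    have := factorization_le_sub_two hp (show 3 ≤ n + 1 - i by omega) (p := p)
    omega
  · -- last term i = n - 1
    have hch : (n.choose (n - 1) : ℚ) = (n : ℚ) := by
      have h2 := Nat.choose_succ_self_right (n - 1)
      rw [Nat.sub_add_cancel hn] at h2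
      exact_mod_cast h2
    have hnk : (n : ℚ) = 2 * (k : ℚ) := by rw [hndef]; push_cast; ring
    have hrw : -(((p : ℚ) * bernoulli (n - 1)) * (n.choose (n - 1) : ℚ)
          * ((p : ℚ) ^ (n - (n - 1)) / ((n + 1 - (n - 1) : ℕ) : ℚ))) / p
        = ((p : ℚ) * bernoulli (n - 1)) * ((-(k : ℤ) : ℤ) : ℚ) := by
      rw [hch, show n - (n - 1) = 1 by omega, show n + 1 - (n - 1) = 2 by omega, pow_one]
      have h1 : (p : ℚ) * bernoulli (n - 1) * (n : ℚ) * ((p : ℚ) / ((2 : ℕ) : ℚ))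
          = ((p : ℚ) * bernoulli (n - 1) * ((n : ℚ) / 2)) * (p : ℚ) := by
        push_cast
        ring
      rw [h1, neg_div, mul_div_cancel_right₀ _ hp0, hnk]
      push_cast
      ring
    rw [hrw]
    exact PIden_mul hp (pid_p_mul_bernoulli p hp _) (PIden_intCast p hp _)

open Finset

lemma PIden_one_div_prime {q p : ℕ} (hq : q.Prime) (hp : p.Prime) (hne : q ≠ p) :
    PIden q (1 / (p : ℚ)) := by
  intro h
  have hdvd : (((1 : ℚ) / (p : ℚ)).den : ℤ) ∣ (p : ℤ) := by
    have := Rat.den_dvd (1 : ℤ) (p : ℤ)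
    rwa [Rat.divInt_eq_div, Int.cast_one, Int.cast_natCast] at this
  have hdvd' : ((1 : ℚ) / (p : ℚ)).den ∣ p := by exact_mod_cast hdvd
  exact hne ((Nat.prime_dvd_prime_iff_eq hq hp).mp (h.trans hdvd'))

lemma PIden_bernoulli_add_inv {q k : ℕ} (hq : q.Prime) (hk : 0 < k)
    (hdvd : (q - 1) ∣ 2 * k) : PIden q (bernoulli (2 * k) + 1 / (q : ℚ)) := by
  have hq0 : (q : ℚ) ≠ 0 := by exact_mod_cast hq.pos.ne'
  obtain ⟨c, hc⟩ : (q : ℤ) ∣ (∑ i ∈ range q, (i : ℤ) ^ (2 * k)) + 1 := by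
    have := int_sum_pow_dvd q hq (2 * k) (by omega)
    rwa [if_pos hdvd] at this
  have hcq : ((((∑ i ∈ range q, (i : ℤ) ^ (2 * k)) : ℤ) : ℚ)) + 1 = (q : ℚ) * (c : ℚ) := by
    exact_mod_cast congrArg (fun z : ℤ => (z : ℚ)) hc
  have hrw : bernoulli (2 * k) + 1 / (q : ℚ)
      = (((q : ℚ) * bernoulli (2 * k))
          - (((∑ i ∈ range q, (i : ℤ) ^ (2 * k)) : ℤ) : ℚ)) / q + (c : ℚ) := by
    push_cast at hcq ⊢
    field_simp
    linear_combination hcq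
  rw [hrw]
  exact PIden_add hq (pid_key q k hq hk) (PIden_intCast q hq c)

lemma PIden_bernoulli {q k : ℕ} (hq : q.Prime) (hk : 0 < k)
    (hdvd : ¬ (q - 1) ∣ 2 * k) : PIden q (bernoulli (2 * k)) := by
  have hq0 : (q : ℚ) ≠ 0 := by exact_mod_cast hq.pos.ne'
  obtain ⟨c, hc⟩ : (q : ℤ) ∣ (∑ i ∈ range q, (i : ℤ) ^ (2 * k)) := by
    have := int_sum_pow_dvd q hq (2 * k) (by omega)
    rwa [if_neg hdvd, add_zero] at this
  have hcq : ((((∑ i ∈ range q, (i : ℤ) ^ (2 * k)) : ℤ) : ℚ)) = (q : ℚ) * (c : ℚ) := by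
    exact_mod_cast congrArg (fun z : ℤ => (z : ℚ)) hc
  have hrw : bernoulli (2 * k)
      = (((q : ℚ) * bernoulli (2 * k))
          - (((∑ i ∈ range q, (i : ℤ) ^ (2 * k)) : ℤ) : ℚ)) / q + (c : ℚ) := by
    push_cast at hcq ⊢
    field_simp
    linear_combination hcq
  rw [hrw]
  exact PIden_add hq (pid_key q k hq hk) (PIden_intCast q hq c)

/-- **Von Staudt–Clausen.** For every positive integer `k`, the rational number
`B (2k) + ∑_{p prime, (p-1) ∣ 2k} 1/p` is an integer; equivalently,
`B (2k) ≡ -∑_{p prime, (p-1) ∣ 2k} 1/p (mod 1)`.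
(Every prime `p` with `(p - 1) ∣ 2k` satisfies `p ≤ 2k + 1`, so the sum below ranges over
all such primes.) -/
theorem vonStaudt_clausen (k : ℕ) (hk : 0 < k) :
    ∃ m : ℤ,
      bernoulli (2 * k) +
        ∑ p ∈ Finset.filter (fun p => Nat.Prime p ∧ (p - 1) ∣ 2 * k)
          (Finset.range (2 * k + 2)), (1 : ℚ) / p = m := by
  set F := Finset.filter (fun p => Nat.Prime p ∧ (p - 1) ∣ 2 * k) (Finset.range (2 * k + 2))
    with hF
  set Q : ℚ := bernoulli (2 * k) + ∑ p ∈ F, (1 : ℚ) / p with hQ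
  have claim : ∀ q : ℕ, q.Prime → PIden q Q := by
    intro q hq
    by_cases hmem : q ∈ F
    · have hq2k : (q - 1) ∣ 2 * k := ((Finset.mem_filter.mp hmem).2).2
      have hsplit : Q = (bernoulli (2 * k) + 1 / (q : ℚ)) + ∑ p ∈ F.erase q, (1 : ℚ) / p := by
        rw [hQ, ← Finset.add_sum_erase _ _ hmem, add_assoc]
      rw [hsplit]
      apply PIden_add hq (PIden_bernoulli_add_inv hq hk hq2k)
      apply PIden_sum hq
      intro p hp
      obtain ⟨hpq, hpF⟩ := Finset.mem_erase.mp hp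
      exact PIden_one_div_prime hq ((Finset.mem_filter.mp hpF).2).1 (Ne.symm hpq)
    · have hnd : ¬ (q - 1) ∣ 2 * k := by
        intro hdvd
        apply hmem
        rw [hF, Finset.mem_filter, Finset.mem_range]
        have h1 : q - 1 ≤ 2 * k := Nat.le_of_dvd (by omega) hdvd
        have h2 : 2 ≤ q := hq.two_le
        exact ⟨by omega, hq, hdvd⟩
      rw [hQ]
      apply PIden_add hq (PIden_bernoulli hq hk hnd)
      apply PIden_sum hq
      intro p hp
      have hpne : p ≠ q := by rintro rfl; exact hmem hp
      exact PIden_one_div_prime hq ((Finset.mem_filter.mp hp).2).1 (Ne.symm hpne)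
  have hden : Q.den = 1 := by
    by_contra h
    obtain ⟨q, hq, hdvd⟩ := Nat.exists_prime_and_dvd h
    exact claim q hq hdvd
  exact ⟨Q.num, ((Rat.den_eq_one_iff Q).mp hden).symm⟩
end

section
/- (Forward direction of Agoh's conjecture) For every prime number p, the rational number p·B_{p-1} + 1 has numerator divisible by p and denominator coprime to p when written in lowest terms; that is, p·B_{p-1} ≡ -1 (mod p) as a congruence of p-integral rational numbers. -/
open Finset

section helpers
variable {p : ℕ} [hp : Fact p.Prime]

lemma agoh_padicNorm_sum_le {α : Type*} (s : Finset α) (f : α → ℚ) {C : ℚ} (hC : 0 ≤ C)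
    (h : ∀ i ∈ s, padicNorm p (f i) ≤ C) : padicNorm p (∑ i ∈ s, f i) ≤ C := by
  classical
  induction s using Finset.induction with
  | empty => simpa [padicNorm.zero] using hC
  | insert _ _ hx ih =>
    rw [Finset.sum_insert hx]
    exact le_trans padicNorm.nonarchimedean
      (max_le (h _ (mem_insert_self _ _)) (ih fun i hi => h i (mem_insert_of_mem hi)))

lemma agoh_key (k : ℕ) (hk : k + 1 < p) : padicNorm p ((p : ℚ) * bernoulli k) ≤ 1 := by
  induction k using Nat.strong_induction_on with
  | _ k ih =>
  have hk1 : ((k : ℚ) + 1) ≠ 0 := by positivity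
  have hmain : (p : ℚ) * bernoulli k =
      ((∑ j ∈ range p, j ^ k : ℕ) : ℚ) -
        ∑ i ∈ range k, ((p : ℚ) * bernoulli i) * ((k + 1).choose i * p ^ (k - i) : ℕ) / (k + 1) := by
    have h := sum_range_pow p k
    rw [Finset.sum_range_succ] at h
    have hlast : bernoulli k * ((k + 1).choose k : ℚ) * (p : ℚ) ^ (k + 1 - k) / (k + 1)
        = (p : ℚ) * bernoulli k := by
      rw [Nat.choose_succ_self_right, Nat.add_sub_cancel_left]
      push_cast
      field_simp
    rw [hlast] at h
    have hterm : ∀ i ∈ range k,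
        bernoulli i * ((k + 1).choose i : ℚ) * (p : ℚ) ^ (k + 1 - i) / (k + 1)
          = ((p : ℚ) * bernoulli i) * ((k + 1).choose i * p ^ (k - i) : ℕ) / (k + 1) := by
      intro i hi
      have hik : i ≤ k := le_of_lt (mem_range.mp hi)
      have : k + 1 - i = (k - i) + 1 := by omega
      rw [this, pow_succ]
      push_cast
      ring
    rw [Finset.sum_congr rfl hterm] at h
    push_cast at h ⊢
    linarith [h]
  rw [hmain]
  refine le_trans padicNorm.sub (max_le (padicNorm.of_nat _) ?_)
  refine agoh_padicNorm_sum_le _ _ zero_le_one ?_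
  intro i hi
  have hik : i < k := mem_range.mp hi
  have hnk1 : padicNorm p ((k : ℚ) + 1) = 1 := by
    have hnd : ¬ p ∣ (k + 1) := Nat.not_dvd_of_pos_of_lt (Nat.succ_pos k) hk
    have := (padicNorm.nat_eq_one_iff (p := p) (k + 1)).mpr hnd
    push_cast at this
    exact this
  rw [padicNorm.div, padicNorm.mul, hnk1, div_one]
  exact mul_le_one₀ (ih i hik (by omega)) (padicNorm.nonneg _) (padicNorm.of_nat _)

lemma agoh_num_den {q : ℚ} (h : padicNorm p q < 1) :
    (p : ℤ) ∣ q.num ∧ Nat.Coprime q.den p := by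
  have hq : padicNorm p q = padicNorm p (q.num : ℚ) / padicNorm p (q.den : ℚ) := by
    rw [← padicNorm.div, Rat.num_div_den]
  have hden : ¬ p ∣ q.den := by
    intro hd
    have hpnum : ¬ (p : ℤ) ∣ q.num := by
      intro hn
      have h1 : p ∣ q.num.natAbs := by
        have := Int.natAbs_dvd_natAbs.mpr hn
        simpa using this
      have h2 : p ∣ Nat.gcd q.num.natAbs q.den := Nat.dvd_gcd h1 hd
      rw [q.reduced] at h2
      have := Nat.le_of_dvd one_pos h2
      have := hp.out.two_le
      omega
    have hnum1 : padicNorm p (q.num : ℚ) = 1 := (padicNorm.int_eq_one_iff _).mpr hpnum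
    have hdenlt : padicNorm p (q.den : ℚ) < 1 := (padicNorm.nat_lt_one_iff _).mpr hd
    have hdenpos : 0 < padicNorm p (q.den : ℚ) := by
      have hne : (q.den : ℚ) ≠ 0 := by exact_mod_cast q.den_ne_zero
      exact lt_of_le_of_ne (padicNorm.nonneg _) (Ne.symm (padicNorm.nonzero hne))
    rw [hq, hnum1] at h
    rw [div_lt_iff₀ hdenpos, one_mul] at h
    linarith
  constructor
  · rw [← padicNorm.int_lt_one_iff]
    have hden1 : padicNorm p (q.den : ℚ) = 1 := (padicNorm.nat_eq_one_iff _).mpr hden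
    rw [hq, hden1, div_one] at h
    exact h
  · exact ((Nat.Prime.coprime_iff_not_dvd hp.out).mpr hden).symm

end helpers

/-- **Forward direction of Agoh's conjecture.** For every prime `p`, the rational number
`p * B (p-1) + 1` has numerator divisible by `p` and denominator coprime to `p` (in lowest
terms); that is, `p * B (p-1) ≡ -1 (mod p)` as a congruence of `p`-integral rationals. -/
theorem agoh_forward (p : ℕ) (hp : p.Prime) :
    (p : ℤ) ∣ ((p : ℚ) * bernoulli (p - 1) + 1).num ∧
    Nat.Coprime ((p : ℚ) * bernoulli (p - 1) + 1).den p := by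
  haveI : Fact p.Prime := ⟨hp⟩
  rcases eq_or_ne p 2 with rfl | hodd
  · norm_num [bernoulli_one]
  · have hp3 : 3 ≤ p := by
      rcases hp.eq_two_or_odd' with h2 | hodd'
      · exact absurd h2 hodd
      · have := hp.two_le; omega
    set n := p - 1 with hn
    have hpn : n + 1 = p := by omega
    have hn2 : 2 ≤ n := by omega
    apply agoh_num_den
    have hQ : ((n : ℚ) + 1) = (p : ℚ) := by exact_mod_cast hpn
    have key : (p : ℚ) * bernoulli n + 1 =
        (((∑ j ∈ range p, j ^ n) + 1 : ℕ) : ℚ) -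
          ∑ i ∈ range n, ((p : ℚ) * bernoulli i) * ((p.choose i * p ^ (p - 2 - i) : ℕ) : ℚ) := by
      have h := sum_range_pow p n
      rw [Finset.sum_range_succ] at h
      have hlast : bernoulli n * ((n + 1).choose n : ℚ) * (p : ℚ) ^ (n + 1 - n) / (n + 1)
          = (p : ℚ) * bernoulli n := by
        rw [Nat.choose_succ_self_right, Nat.add_sub_cancel_left]
        push_cast
        field_simp
      rw [hlast] at h
      have hterm : ∀ i ∈ range n,
          bernoulli i * ((n + 1).choose i : ℚ) * (p : ℚ) ^ (n + 1 - i) / (n + 1)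
            = ((p : ℚ) * bernoulli i) * ((p.choose i * p ^ (p - 2 - i) : ℕ) : ℚ) := by
        intro i hi
        have hik : i < n := mem_range.mp hi
        have h1 : n + 1 - i = (p - 2 - i) + 2 := by omega
        have hc : (n + 1).choose i = p.choose i := by rw [hpn]
        have hppos : (p : ℚ) ≠ 0 := by
          have := hp.pos; positivity
        rw [h1, hc]
        push_cast
        rw [hQ, pow_add]
        field_simp
      rw [Finset.sum_congr rfl hterm] at h
      push_cast at h ⊢
      linarith [h]
    rw [key]
    have hple : (0 : ℚ) < (p : ℚ)⁻¹ := by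
      have := hp.pos
      positivity
    have hbound : padicNorm p ((((∑ j ∈ range p, j ^ n) + 1 : ℕ) : ℚ) -
          ∑ i ∈ range n, ((p : ℚ) * bernoulli i) * ((p.choose i * p ^ (p - 2 - i) : ℕ) : ℚ))
        ≤ (p : ℚ)⁻¹ := by
      refine le_trans padicNorm.sub (max_le ?_ ?_)
      · -- Fermat: p ∣ N + 1
        have hp1 : p - 1 + 1 = p := by omega
        have hsplit := Finset.sum_range_succ' (fun j => j ^ n) (p - 1)
        rw [hp1] at hsplit
        have hdvd : p ∣ (∑ j ∈ range p, j ^ n) + 1 := by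
          rw [← ZMod.natCast_eq_zero_iff, hsplit]
          have h0 : (0 : ℕ) ^ n = 0 := by
            rw [Nat.zero_pow]; omega
          rw [h0, add_zero]
          push_cast
          have hall : ∀ j ∈ range (p - 1), ((j : ZMod p) + 1) ^ n = 1 := by
            intro j hj
            have hjlt : j + 1 < p := by have := mem_range.mp hj; omega
            have hne0 : ((j : ZMod p) + 1) ≠ 0 := by
              have h3 : (((j + 1 : ℕ)) : ZMod p) ≠ 0 := by
                rw [Ne, ZMod.natCast_eq_zero_iff]
                intro hdd
                have := Nat.le_of_dvd (by omega) hdd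
                omega
              push_cast at h3
              exact h3
            exact ZMod.pow_card_sub_one_eq_one hne0
          rw [Finset.sum_congr rfl hall, Finset.sum_const, card_range, nsmul_eq_mul, mul_one]
          have hcast : ((p - 1 : ℕ) : ZMod p) = -1 := by
            rw [Nat.cast_sub (by omega : 1 ≤ p), ZMod.natCast_self, Nat.cast_one]
            ring
          rw [hcast]
          ring
        have hz : ((p : ℤ) ^ 1) ∣ (((∑ j ∈ range p, j ^ n) + 1 : ℕ) : ℤ) := by
          rw [pow_one]
          exact_mod_cast hdvd
        have hnorm := (padicNorm.dvd_iff_norm_le (p := p) (n := 1)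
          (z := (((∑ j ∈ range p, j ^ n) + 1 : ℕ) : ℤ))).mp (by exact_mod_cast hz)
        simpa using hnorm
      · refine agoh_padicNorm_sum_le _ _ (le_of_lt hple) ?_
        intro i hi
        have hik : i < n := mem_range.mp hi
        rw [padicNorm.mul]
        have h1 : padicNorm p ((p : ℚ) * bernoulli i) ≤ 1 := agoh_key i (by omega)
        have h2 : padicNorm p ((p.choose i * p ^ (p - 2 - i) : ℕ) : ℚ) ≤ (p : ℚ)⁻¹ := by
          have hdvd : p ∣ p.choose i * p ^ (p - 2 - i) := by
            rcases eq_or_ne i 0 with rfl | hi0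
            · exact Dvd.dvd.mul_left (dvd_pow_self p (by omega)) _
            · exact Dvd.dvd.mul_right (hp.dvd_choose_self hi0 (by omega)) _
          have hz : ((p : ℤ) ^ 1) ∣ ((p.choose i * p ^ (p - 2 - i) : ℕ) : ℤ) := by
            rw [pow_one]; exact_mod_cast hdvd
          have hnorm := (padicNorm.dvd_iff_norm_le (p := p) (n := 1)
            (z := ((p.choose i * p ^ (p - 2 - i) : ℕ) : ℤ))).mp (by exact_mod_cast hz)
          simpa using hnorm
        calc padicNorm p ((p : ℚ) * bernoulli i) *
              padicNorm p ((p.choose i * p ^ (p - 2 - i) : ℕ) : ℚ)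
            ≤ 1 * (p : ℚ)⁻¹ := mul_le_mul h1 h2 (padicNorm.nonneg _) zero_le_one
          _ = (p : ℚ)⁻¹ := one_mul _
    refine lt_of_le_of_lt hbound ?_
    rw [inv_lt_one_iff₀]
    right
    exact_mod_cast hp.one_lt
end
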